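/- arXiv:1605.06387 — 7 statements merged into one kernel-verified Lean document; each statement's English description precedes it below -/
import Mathlib

section
/- For all integers n ≥ 1, r ≥ 1 and k ≥ 1: (a) every F ⊆ [n]^r with |F| > (k−1)·n^{r−1} contains k pairwise disjoint edges; (b) if k−1 ≤ n, there exists F ⊆ [n]^r with |F| = (k−1)·n^{r−1} containing no k pairwise disjoint edges. Equivalently, g(n,r,k), the smallest number such that every sub-hypergraph of [n]^r of size larger than it has a matching of size k, equals (k−1)·n^{r−1}. -/
/-!
Upper bound: the translates `e + c` of an edge by constant vectors form a perfect matching, and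
these matchings partition `[n]^r` into `n^(r-1)` classes, indexed by the differences
`e i - e i₀`. A family with more than `(k-1) n^(r-1)` edges meets some class in at least `k`
edges.

Lower bound: the edges whose `i₀`-th coordinate lies in a fixed `(k-1)`-set; edges of a
matching have distinct `i₀`-th coordinates.
-/

/-- Two edges of `[n]^r` (viewed as functions `Fin r → Fin n`) are disjoint if they
differ in every coordinate. -/
def pairDisjoint {n r : ℕ} (e f : Fin r → Fin n) : Prop := ∀ i, e i ≠ f i

open Finset

section
variable {ι α : Type*} [Fintype ι] [DecidableEq ι] [Fintype α]

lemma card_fun_ne_point (i₀ : ι) :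
    Fintype.card ({i // i ≠ i₀} → α) = Fintype.card α ^ (Fintype.card ι - 1) := by
  simp [Fintype.card_subtype_compl]

lemma card_filter_apply_mem [DecidableEq α] (i₀ : ι) (S : Finset α) :
    #{e : ι → α | e i₀ ∈ S} = #S * Fintype.card α ^ (Fintype.card ι - 1) := by
  rw [← card_fun_ne_point i₀, ← card_univ, ← card_product,
    ← card_map (Equiv.funSplitAt i₀ α).toEmbedding]
  congr 1
  ext e
  simp

end

lemma card_le_of_pairwise_ne_of_forall_apply_mem {ι α : Type*} {i₀ : ι} {S : Finset α}
    {M : Finset (ι → α)} (hM : ∀ e ∈ M, e i₀ ∈ S)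
    (hdisj : (M : Set (ι → α)).Pairwise fun e f => ∀ i, e i ≠ f i) : #M ≤ #S :=
  card_le_card_of_injOn (· i₀) hM fun _ he _ hf h => by_contra fun hne => hdisj he hf hne i₀ h

section
variable {ι G : Type*} [DecidableEq ι] [AddGroup G]

def diffsFrom (i₀ : ι) (e : ι → G) : {i // i ≠ i₀} → G := fun i => e i - e i₀

lemma eq_of_diffsFrom_eq {i₀ : ι} {e f : ι → G} (h : diffsFrom i₀ e = diffsFrom i₀ f)
    {i : ι} (hi : e i = f i) : e = f := by
  have hdiff : ∀ j, e j - e i₀ = f j - f i₀ := by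
    intro j
    by_cases hj : j = i₀
    · simp [hj]
    · exact congrFun h ⟨j, hj⟩
  have h₀ : e i₀ = f i₀ := by
    have := hdiff i
    rw [hi] at this
    exact sub_right_inj.mp this
  funext j
  simpa [h₀] using hdiff j

lemma exists_subset_card_eq_pairwise_ne [Fintype ι] [Fintype G] [DecidableEq G] (i₀ : ι)
    {F : Finset (ι → G)} {k : ℕ} (hF : k * Fintype.card G ^ (Fintype.card ι - 1) < #F) :
    ∃ M ⊆ F, #M = k + 1 ∧ (M : Set (ι → G)).Pairwise fun e f => ∀ i, e i ≠ f i := by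
  have hclasses : #(univ : Finset ({i // i ≠ i₀} → G)) * k < #F := by
    rwa [card_univ, card_fun_ne_point, mul_comm]
  obtain ⟨d, -, hd⟩ := exists_lt_card_fiber_of_mul_lt_card_of_maps_to
    (fun e _ => mem_univ (diffsFrom i₀ e)) hclasses
  obtain ⟨M, hMd, hM⟩ := exists_subset_card_eq (Nat.succ_le_of_lt hd)
  refine ⟨M, hMd.trans (filter_subset _ _), hM, fun e he f hf hne i hi => hne ?_⟩
  exact eq_of_diffsFrom_eq ((mem_filter.mp (hMd he)).2.trans (mem_filter.mp (hMd hf)).2.symm) hi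
end

theorem stmt0 (n r k : ℕ) (hn : 1 ≤ n) (hr : 1 ≤ r) (hk : 1 ≤ k) :
    (∀ F : Finset (Fin r → Fin n), (k - 1) * n ^ (r - 1) < F.card →
      ∃ M : Finset (Fin r → Fin n), M ⊆ F ∧ M.card = k ∧
        (M : Set (Fin r → Fin n)).Pairwise pairDisjoint) ∧
    (k - 1 ≤ n →
      ∃ F : Finset (Fin r → Fin n), F.card = (k - 1) * n ^ (r - 1) ∧
        ¬ ∃ M : Finset (Fin r → Fin n), M ⊆ F ∧ M.card = k ∧
          (M : Set (Fin r → Fin n)).Pairwise pairDisjoint) := by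
  have : NeZero n := ⟨by omega⟩
  let i₀ : Fin r := ⟨0, hr⟩
  refine ⟨fun F hF => ?_, fun hkn => ?_⟩
  · obtain ⟨M, hMF, hM, hdisj⟩ :=
      exists_subset_card_eq_pairwise_ne (G := Fin n) (k := k - 1) i₀ (by simpa using hF)
    exact ⟨M, hMF, by omega, hdisj⟩
  · obtain ⟨S, -, hS⟩ := exists_subset_card_eq (s := (univ : Finset (Fin n))) (n := k - 1)
      (by rwa [card_univ, Fintype.card_fin])
    refine ⟨({e | e i₀ ∈ S} : Finset (Fin r → Fin n)),
      by simp [card_filter_apply_mem, hS], ?_⟩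
    rintro ⟨M, hMF, hM, hdisj⟩
    have hMS := card_le_of_pairwise_ne_of_forall_apply_mem
      (fun e he => (mem_filter.mp (hMF he)).2) hdisj
    omega
end

section
/- Let V be a finite linearly ordered set, let x < y be elements of V, and let (F_i)_{i ∈ I} be a finite family of hypergraphs on V (each F_i a finite family of finite subsets of V). If the family (s_{xy}(F_i))_{i ∈ I} admits a rainbow matching, then so does (F_i)_{i ∈ I}. -/
/-- The shift `s_{xy}(e)` of an edge `e` of the hypergraph `H`. -/
def shiftEdge {V : Type*} [DecidableEq V] (H : Finset (Finset V)) (x y : V)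
    (e : Finset V) : Finset V :=
  if y ∈ e ∧ x ∉ e ∧ insert x (e.erase y) ∉ H then insert x (e.erase y) else e

/-- The shifted hypergraph `s_{xy}(H) = {s_{xy}(e) : e ∈ H}`. -/
def shiftH {V : Type*} [DecidableEq V] (x y : V) (H : Finset (Finset V)) :
    Finset (Finset V) :=
  H.image (shiftEdge H x y)

/-!
Write `τ` for the transposition of `x` and `y`, acting on sets. A shifted edge that is not an
edge of `H` is `τ f` for some `f ∈ H` with `y ∈ f`, `x ∉ f`, so it contains `x`; and a shifted
edge `e` avoiding `x` has `τ e ∈ H`, since `e` was left alone by the shift. Hence if a rainbow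
matching of the shifted family is not already one of the original family, exactly one of its
edges contains `x`, and applying `τ` to every edge gives a rainbow matching of the original one.
-/

namespace Finset

variable {V : Type*} [DecidableEq V] {x y : V} {s : Finset V}

theorem map_swap_eq_insert_erase (hy : y ∈ s) (hx : x ∉ s) :
    s.map (Equiv.swap x y).toEmbedding = insert x (s.erase y) := by
  ext a
  rw [mem_map_equiv, Equiv.symm_swap, mem_insert, mem_erase, Equiv.swap_apply_def]
  split_ifs <;> grind

theorem map_swap_eq_self (hx : x ∉ s) (hy : y ∉ s) :
    s.map (Equiv.swap x y).toEmbedding = s := by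
  ext a
  rw [mem_map_equiv, Equiv.symm_swap, Equiv.swap_apply_def]
  split_ifs <;> grind

end Finset

section Shift

variable {V : Type*} [DecidableEq V] {x y : V} {H : Finset (Finset V)} {e : Finset V}

theorem mem_and_map_swap_mem_of_mem_shiftH_of_notMem (he : e ∈ shiftH x y H) (heH : e ∉ H) :
    x ∈ e ∧ e.map (Equiv.swap x y).toEmbedding ∈ H := by
  obtain ⟨f, hf, rfl⟩ := Finset.mem_image.mp he
  unfold shiftEdge at heH ⊢
  split_ifs with hshift
  · have hinv : (f.map (Equiv.swap x y).toEmbedding).map (Equiv.swap x y).toEmbedding = f := by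
      ext; simp [Finset.mem_map_equiv]
    rw [← Finset.map_swap_eq_insert_erase hshift.1 hshift.2.1, Finset.mem_map_equiv, hinv]
    simpa using ⟨hshift.1, hf⟩
  · exact absurd hf (by rwa [if_neg hshift] at heH)

theorem map_swap_mem_of_mem_shiftH_of_notMem (he : e ∈ shiftH x y H) (hx : x ∉ e) :
    e.map (Equiv.swap x y).toEmbedding ∈ H := by
  obtain ⟨f, hf, rfl⟩ := Finset.mem_image.mp he
  unfold shiftEdge at hx ⊢
  split_ifs at hx ⊢ with hshift
  · exact absurd (Finset.mem_insert_self x _) hx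
  · by_cases hy : y ∈ f
    · rw [Finset.map_swap_eq_insert_erase hy hx]
      simpa [hy, hx] using hshift
    · rwa [Finset.map_swap_eq_self hx hy]

end Shift

theorem stmt1_general {V I : Type*} [LinearOrder V]
    (x y : V) (F : I → Finset (Finset V))
    (h : ∃ e : I → Finset V, (∀ i, e i ∈ shiftH x y (F i)) ∧
      ∀ i j, i ≠ j → Disjoint (e i) (e j)) :
    ∃ e : I → Finset V, (∀ i, e i ∈ F i) ∧ ∀ i j, i ≠ j → Disjoint (e i) (e j) := by
  obtain ⟨e, he, hdisj⟩ := h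
  by_cases hF : ∀ i, e i ∈ F i
  · exact ⟨e, hF, hdisj⟩
  push Not at hF
  obtain ⟨i₀, hi₀⟩ := hF
  obtain ⟨hx, hswap⟩ := mem_and_map_swap_mem_of_mem_shiftH_of_notMem (he i₀) hi₀
  refine ⟨fun i => (e i).map (Equiv.swap x y).toEmbedding, fun i => ?_,
    fun i j hij => Finset.disjoint_map _ |>.mpr (hdisj i j hij)⟩
  rcases eq_or_ne i i₀ with rfl | hi
  · exact hswap
  · exact map_swap_mem_of_mem_shiftH_of_notMem (he i)
      (Finset.disjoint_left.mp (hdisj i₀ i hi.symm) hx)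

theorem stmt1 {V I : Type*} [Fintype V] [LinearOrder V] [Fintype I]
    (x y : V) (hxy : x < y) (F : I → Finset (Finset V))
    (h : ∃ e : I → Finset V, (∀ i, e i ∈ shiftH x y (F i)) ∧
      ∀ i j, i ≠ j → Disjoint (e i) (e j)) :
    ∃ e : I → Finset V, (∀ i, e i ∈ F i) ∧ ∀ i j, i ≠ j → Disjoint (e i) (e j) :=
  stmt1_general x y F h
end

section
/- For r ≥ 2 and every sequence σ ∈ Ψ_{r−1} (a sequence over {∧, ∨} of length at most r−2): (1) f_r(σ) = n·f_{r−1}(σ); (2) f_r((∧)⌢σ) = f_{r−1}(σ); (3) f_r((∨)⌢σ) = n^{r−1} + (n−1)·f_{r−1}(σ), where (∧)⌢σ and (∨)⌢σ denote σ prefixed by ∧ and ∨ respectively. -/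
/-- Whether the `j`-th coordinate of the edge `e` equals the distinguished vertex
(the first vertex of its side, representing `v_{j+1} = 1`). -/
def vcond {n r : ℕ} (e : Fin r → Fin n) (j : ℕ) : Bool :=
  if h : j < r then decide ((e ⟨j, h⟩ : ℕ) = 0) else false

/-- The nested condition `v_{j+1} ∈ e σ₁ (v_{j+2} ∈ e σ₂ (⋯))` determined by a
sequence `σ` over `{∧, ∨}` (where `false` encodes `∧` and `true` encodes `∨`). -/
def edgeCond {n r : ℕ} (e : Fin r → Fin n) : ℕ → List Bool → Bool
  | j, [] => vcond e j
  | j, false :: s => vcond e j && edgeCond e (j + 1) s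
  | j, true :: s => vcond e j || edgeCond e (j + 1) s

/-- `F_r(σ)`: the set of edges of `[n]^r` satisfying the nested condition given by `σ`. -/
def Fset (n r : ℕ) (σ : List Bool) : Finset (Fin r → Fin n) :=
  Finset.univ.filter (fun e => edgeCond e 0 σ = true)

/-- `f_r(σ) = |F_r(σ)|`. -/
def fval (n r : ℕ) (σ : List Bool) : ℕ := (Fset n r σ).card

/-- `Ψ_r`: the sequences over `{∧, ∨}` of length at most `r - 1`. -/
def PsiSet (r : ℕ) : Finset (List Bool) :=
  (Finset.range r).biUnion (fun m => (Finset.univ : Finset (Fin m → Bool)).image List.ofFn)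

/-- The set of values `{f_r(σ) : σ ∈ Σ_r}`, where `f_r(α) = 0` and `f_r(ω) = n ^ r`. -/
def Nvals (n r : ℕ) : Finset ℕ :=
  insert 0 (insert (n ^ r) ((PsiSet r).image (fval n r)))

/-- `N_r(i)`: the `(i+1)`-st smallest element of `{f_r(σ) : σ ∈ Σ_r}`. -/
def Nseq (n r i : ℕ) : ℕ := (Finset.sort (Nvals n r) (· ≤ ·)).getD i 0

/-!
An edge of `[n]^r` is a first coordinate followed by an edge of `[n]^(r-1)`, or an edge of
`[n]^(r-1)` followed by a last coordinate. Since `|σ| ≤ r - 2`, the condition for `σ` never reads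
the last coordinate, which is therefore free: this gives the factor `n`. Splitting off the first
coordinate instead, if it is `v_1` then `∧` leaves `f_{r-1}(σ)` choices for the rest and `∨`
leaves all `n^(r-1)`; otherwise `∧` leaves none and `∨` leaves `f_{r-1}(σ)` for each of the
`n - 1` other values.
-/

open Finset

section Tuples

variable {α : Type*} [Fintype α] {m : ℕ}

lemma card_filter_fin_succ_eq_sum_cons (p : (Fin (m + 1) → α) → Prop) [DecidablePred p] :
    #{e | p e} = ∑ x : α, #{g : Fin m → α | p (Fin.cons x g)} := by
  simp only [card_filter]
  rw [← (Fin.consEquiv fun _ => α).sum_comp, Fintype.sum_prod_type]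
  rfl

lemma card_filter_fin_succ_eq_sum_snoc (p : (Fin (m + 1) → α) → Prop) [DecidablePred p] :
    #{e | p e} = ∑ x : α, #{g : Fin m → α | p (Fin.snoc g x)} := by
  simp only [card_filter]
  rw [← (Fin.snocEquiv fun _ => α).sum_comp, Fintype.sum_prod_type]
  rfl

end Tuples

section EdgeCond

variable {n m : ℕ}

lemma vcond_cons_zero (x : Fin n) (g : Fin m → Fin n) :
    vcond (Fin.cons x g : Fin (m + 1) → Fin n) 0 = decide ((x : ℕ) = 0) := by
  simp [vcond]

lemma vcond_cons_succ (x : Fin n) (g : Fin m → Fin n) (j : ℕ) :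
    vcond (Fin.cons x g : Fin (m + 1) → Fin n) (j + 1) = vcond g j := by
  by_cases h : j < m
  · simp only [vcond, dif_pos h, dif_pos (Nat.succ_lt_succ h)]
    exact congrArg (fun y : Fin n => decide ((y : ℕ) = 0))
      (Fin.cons_succ (α := fun _ => Fin n) x g ⟨j, h⟩)
  · simp [vcond, h]

lemma edgeCond_cons_succ (x : Fin n) (g : Fin m → Fin n) :
    ∀ (s : List Bool) (j : ℕ),
      edgeCond (Fin.cons x g : Fin (m + 1) → Fin n) (j + 1) s = edgeCond g j s
  | [], j => vcond_cons_succ x g j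
  | b :: s, j => by
      cases b <;> simp only [edgeCond, vcond_cons_succ, edgeCond_cons_succ x g s (j + 1)]

lemma vcond_snoc (g : Fin m → Fin n) (x : Fin n) {j : ℕ} (h : j < m) :
    vcond (Fin.snoc g x : Fin (m + 1) → Fin n) j = vcond g j := by
  simp only [vcond, dif_pos h, dif_pos (Nat.lt_succ_of_lt h)]
  exact congrArg (fun y : Fin n => decide ((y : ℕ) = 0))
    (Fin.snoc_castSucc (α := fun _ => Fin n) x g ⟨j, h⟩)

lemma edgeCond_snoc (g : Fin m → Fin n) (x : Fin n) :
    ∀ (s : List Bool) (j : ℕ), j + s.length < m →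
      edgeCond (Fin.snoc g x : Fin (m + 1) → Fin n) j s = edgeCond g j s
  | [], j, h => vcond_snoc g x h
  | b :: s, j, h => by
      simp only [List.length_cons] at h
      cases b <;> simp only [edgeCond, vcond_snoc g x (by omega : j < m),
        edgeCond_snoc g x s (j + 1) (by omega)]

end EdgeCond

lemma length_lt_of_mem_PsiSet {r : ℕ} {σ : List Bool} (hσ : σ ∈ PsiSet r) :
    σ.length < r := by
  simp only [PsiSet, mem_biUnion, mem_range, mem_image] at hσ
  obtain ⟨k, hk, f, -, rfl⟩ := hσ
  simpa using hk

lemma fval_zero_left {r : ℕ} (hr : r ≠ 0) (σ : List Bool) : fval 0 r σ = 0 := by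
  have : IsEmpty (Fin r → Fin 0) := ⟨fun e => (e ⟨0, Nat.pos_of_ne_zero hr⟩).elim0⟩
  simp [fval, Fset, univ_eq_empty]

lemma fval_succ_of_length_lt {n m : ℕ} {σ : List Bool} (hσ : σ.length < m) :
    fval n (m + 1) σ = n * fval n m σ := by
  rw [fval, Fset, card_filter_fin_succ_eq_sum_snoc]
  have hsnoc (g : Fin m → Fin n) (x : Fin n) := edgeCond_snoc g x σ 0 (by omega)
  simp [hsnoc, fval, Fset]

lemma fval_succ_and {n m : ℕ} (hm : m ≠ 0) (σ : List Bool) :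
    fval n (m + 1) (false :: σ) = fval n m σ := by
  obtain _ | k := n
  · rw [fval_zero_left (by omega), fval_zero_left hm]
  rw [fval, Fset, card_filter_fin_succ_eq_sum_cons, Fin.sum_univ_succ]
  simp [edgeCond, vcond_cons_zero, edgeCond_cons_succ, fval, Fset]

lemma fval_succ_or {n m : ℕ} (hm : m ≠ 0) (σ : List Bool) :
    fval n (m + 1) (true :: σ) = n ^ m + (n - 1) * fval n m σ := by
  obtain _ | k := n
  · rw [fval_zero_left (by omega), fval_zero_left hm, zero_pow hm]
  rw [fval, Fset, card_filter_fin_succ_eq_sum_cons, Fin.sum_univ_succ]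
  simp [edgeCond, vcond_cons_zero, edgeCond_cons_succ, fval, Fset]

theorem stmt2 (n r : ℕ) (hr : 2 ≤ r) (σ : List Bool) (hσ : σ ∈ PsiSet (r - 1)) :
    fval n r σ = n * fval n (r - 1) σ ∧
    fval n r (false :: σ) = fval n (r - 1) σ ∧
    fval n r (true :: σ) = n ^ (r - 1) + (n - 1) * fval n (r - 1) σ := by
  obtain ⟨m, rfl⟩ : ∃ m, r = m + 1 := ⟨r - 1, by omega⟩
  rw [Nat.add_sub_cancel] at hσ ⊢
  have hm : m ≠ 0 := by omega
  exact ⟨fval_succ_of_length_lt (length_lt_of_mem_PsiSet hσ), fval_succ_and hm σ,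
    fval_succ_or hm σ⟩
end

section
/- For every σ ∈ Σ_r, B(F_r(σ)) = F_r(σ̄), where σ̄ is obtained from σ ∈ Ψ_r by replacing every ∧ by ∨ and every ∨ by ∧, and ᾱ = ω, ω̄ = α. -/
/-- The blocker `B(F)`: edges of `[n]^r` meeting every edge of `F`. -/
def blocker (n r : ℕ) (F : Finset (Fin r → Fin n)) : Finset (Fin r → Fin n) :=
  Finset.univ.filter (fun e => ∀ f ∈ F, ∃ i, e i = f i)

/-- The index set `Σ_r = Ψ_r ∪ {α, ω}` (elements of `Ψ_r` are sequences over
`{∧, ∨}`, with `false` encoding `∧` and `true` encoding `∨`). -/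
inductive Sig where
  | alpha : Sig
  | seq (σ : List Bool) : Sig
  | omega : Sig

/-- Membership in `Σ_r`: a sequence must have length at most `r - 1`. -/
def Sig.valid (r : ℕ) : Sig → Prop
  | .seq σ => σ.length < r
  | _ => True

/-- `F_r(σ)` for `σ ∈ Σ_r`, with `F_r(α) = ∅` and `F_r(ω) = [n]^r`. -/
def Sig.Fbig (n r : ℕ) : Sig → Finset (Fin r → Fin n)
  | .alpha => ∅
  | .seq σ => Fset n r σ
  | .omega => Finset.univ

/-- `σ̄`: interchange `∧` and `∨`; `ᾱ = ω` and `ω̄ = α`. -/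
def Sig.bar : Sig → Sig
  | .alpha => .omega
  | .seq σ => .seq (σ.map not)
  | .omega => .alpha

/-! Say that `e` blocks a family *from `j`* if it meets every member in a coordinate `≥ j`.
From position `j` on, the condition of `σ` reads `v_j ∈ f ∘ Q f` with `∘ ∈ {∧, ∨}` and `Q`
depending only on the coordinates after `j`. As `n ≥ 2`, the `j`-th coordinate of a member can be
set freely (to `v_j`, or to a vertex avoiding `e j`) without affecting `Q`. Hence `e` blocks
`{v_j ∈ f ∧ Q f}` from `j` iff `v_j ∈ e` or `e` blocks `Q` from `j + 1`, and it blocks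
`{v_j ∈ f ∨ Q f}` from `j` iff `v_j ∈ e` and `e` blocks `Q` from `j + 1`. Induction along `σ`
therefore swaps every connective. -/

lemma Function.exists_forall_ne {ι α : Type*} [Nontrivial α] (e : ι → α) :
    ∃ g : ι → α, ∀ i, g i ≠ e i :=
  ⟨fun i => (exists_ne (e i)).choose, fun i => (exists_ne (e i)).choose_spec⟩

namespace Blocker

variable {n r : ℕ}

def IntersectsFrom (j : ℕ) (e f : Fin r → Fin n) : Prop :=
  ∃ i : Fin r, j ≤ (i : ℕ) ∧ e i = f i

@[simp]
lemma intersectsFrom_zero_iff {e f : Fin r → Fin n} :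
    IntersectsFrom 0 e f ↔ ∃ i, e i = f i := by
  simp [IntersectsFrom]

lemma IntersectsFrom.of_succ {j : ℕ} {e f : Fin r → Fin n} (h : IntersectsFrom (j + 1) e f) :
    IntersectsFrom j e f :=
  let ⟨i, hji, hi⟩ := h
  ⟨i, by omega, hi⟩

lemma IntersectsFrom.succ_of_update {j : ℕ} (hj : j < r) {e f : Fin r → Fin n} {x : Fin n}
    (h : IntersectsFrom j e (Function.update f ⟨j, hj⟩ x)) (hx : x ≠ e ⟨j, hj⟩) :
    IntersectsFrom (j + 1) e f := by
  obtain ⟨i, hji, hi⟩ := h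
  have hij : i ≠ ⟨j, hj⟩ := by
    rintro rfl
    exact hx (by simpa using hi.symm)
  refine ⟨i, ?_, by simpa [hij] using hi⟩
  have : (i : ℕ) ≠ j := fun h => hij (Fin.ext h)
  omega

lemma vcond_eq_true_iff {j : ℕ} (hj : j < r) (e : Fin r → Fin n) :
    vcond e j = true ↔ (e ⟨j, hj⟩ : ℕ) = 0 := by
  simp [vcond, hj]

lemma intersectsFrom_of_vcond {j : ℕ} {e f : Fin r → Fin n}
    (he : vcond e j = true) (hf : vcond f j = true) : IntersectsFrom j e f := by
  have hj : j < r := by by_contra hj; simp [vcond, hj] at he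
  rw [vcond_eq_true_iff hj] at he hf
  exact ⟨⟨j, hj⟩, le_rfl, Fin.ext (he.trans hf.symm)⟩

lemma vcond_update {i : Fin r} {j : ℕ} (hij : (i : ℕ) < j) (f : Fin r → Fin n) (x : Fin n) :
    vcond (Function.update f i x) j = vcond f j := by
  unfold vcond
  split
  · rw [Function.update_of_ne fun h => hij.ne' (congrArg Fin.val h)]
  · rfl

lemma edgeCond_update {i : Fin r} {j : ℕ} (hij : (i : ℕ) < j) (f : Fin r → Fin n) (x : Fin n)
    (s : List Bool) : edgeCond (Function.update f i x) j s = edgeCond f j s := by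
  induction s generalizing j with
  | nil => exact vcond_update hij f x
  | cons b t ih =>
    cases b <;> simp only [edgeCond, vcond_update hij, ih (Nat.lt_succ_of_lt hij)]

section Step

variable {j : ℕ} (hn : 2 ≤ n) (hj : j < r) {Q : (Fin r → Fin n) → Prop}
  (hQ : ∀ f x, Q (Function.update f ⟨j, hj⟩ x) ↔ Q f) (e : Fin r → Fin n)
include hn hQ

lemma forall_intersectsFrom_and_iff :
    (∀ f, vcond f j = true ∧ Q f → IntersectsFrom j e f) ↔
      vcond e j = true ∨ ∀ f, Q f → IntersectsFrom (j + 1) e f := by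
  constructor
  · intro h
    refine or_iff_not_imp_left.mpr fun he f hf => ?_
    have hzero : (⟨0, by omega⟩ : Fin n) ≠ e ⟨j, hj⟩ := fun h0 =>
      he ((vcond_eq_true_iff hj e).mpr (by simp [← h0]))
    exact IntersectsFrom.succ_of_update hj
      (h _ ⟨by simp [vcond_eq_true_iff hj], (hQ f _).mpr hf⟩) hzero
  · rintro (he | hB) f ⟨hf, hQf⟩
    · exact intersectsFrom_of_vcond he hf
    · exact (hB f hQf).of_succ

lemma forall_intersectsFrom_or_iff :
    (∀ f, vcond f j = true ∨ Q f → IntersectsFrom j e f) ↔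
      vcond e j = true ∧ ∀ f, Q f → IntersectsFrom (j + 1) e f := by
  have := Fin.nontrivial_iff_two_le.mpr hn
  obtain ⟨g, hg⟩ := Function.exists_forall_ne e
  constructor
  · intro h
    refine ⟨?_, fun f hf => ?_⟩
    · by_contra he
      have hzero : (⟨0, by omega⟩ : Fin n) ≠ e ⟨j, hj⟩ := fun h0 =>
        he ((vcond_eq_true_iff hj e).mpr (by simp [← h0]))
      obtain ⟨i, -, hi⟩ := IntersectsFrom.succ_of_update hj
        (h _ (Or.inl (by simp [vcond_eq_true_iff hj]))) hzero
      exact hg i hi.symm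
    · exact IntersectsFrom.succ_of_update hj (h _ (Or.inr ((hQ f _).mpr hf))) (hg _)
  · rintro ⟨he, hB⟩ f (hf | hQf)
    · exact intersectsFrom_of_vcond he hf
    · exact (hB f hQf).of_succ

end Step

theorem edgeCond_map_not_iff (hn : 2 ≤ n) (e : Fin r → Fin n) (s : List Bool) {j : ℕ}
    (hjs : j + s.length < r) :
    edgeCond e j (s.map not) = true ↔
      ∀ f, edgeCond f j s = true → IntersectsFrom j e f := by
  induction s generalizing j with
  | nil =>
    -- the last position is the `∨` step with an empty alternative
    simpa [edgeCond] using
      (forall_intersectsFrom_or_iff hn hjs (Q := fun _ => False) (by simp) e).symm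
  | cons b t ih =>
    simp only [List.length_cons] at hjs
    have hj : j < r := by omega
    have hQ (f : Fin r → Fin n) (x : Fin n) :
        edgeCond (Function.update f ⟨j, hj⟩ x) (j + 1) t = true ↔
          edgeCond f (j + 1) t = true := by
      rw [edgeCond_update (Nat.lt_succ_self j)]
    have ih' := ih (j := j + 1) (by omega)
    cases b
    · simp only [List.map_cons, Bool.not_false, edgeCond, Bool.or_eq_true, Bool.and_eq_true]
      rw [forall_intersectsFrom_and_iff hn hj hQ, ih']
    · simp only [List.map_cons, Bool.not_true, edgeCond, Bool.or_eq_true, Bool.and_eq_true]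
      rw [forall_intersectsFrom_or_iff hn hj hQ, ih']

end Blocker

open Blocker in
theorem stmt6 (n r : ℕ) (hn : 2 ≤ n) (σ : Sig) (hσ : σ.valid r) :
    blocker n r (σ.Fbig n r) = (σ.bar.Fbig n r) := by
  cases σ with
  | alpha => simp [Sig.Fbig, Sig.bar, blocker]
  | omega =>
    have := Fin.nontrivial_iff_two_le.mpr hn
    ext e
    obtain ⟨g, hg⟩ := Function.exists_forall_ne e
    simpa [Sig.Fbig, Sig.bar, blocker] using ⟨g, fun i hi => hg i hi.symm⟩
  | seq s =>
    ext e
    have hs : 0 + s.length < r := by simpa [Sig.valid] using hσ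
    simp [Sig.Fbig, Sig.bar, blocker, Fset, edgeCond_map_not_iff hn e s hs]
end

section
/- For n ≥ 2 and all integers 0 ≤ i ≤ j with i + j ≤ 2^r: N_r(j + i) − N_r(j) ≥ (n−1)·N_r(i). -/
/-!
Record for an edge `e` the binary word whose `j`-th digit (most significant first) is `1` iff
`e j ≠ v_{j+1}`. The nested condition given by `σ` says exactly that this word, read as a number,
is below the number `m_σ` with binary digits `σ, 1, 0, …, 0` (`∨` as `1`). Since `m` has
`(n - 1) ^ (number of ones of m)` preimages, `f_r(σ) = S(m_σ)` with
`S(m) = ∑_{t < m} (n - 1) ^ (number of ones of t)`; the indices `m_σ` are exactly `0 < m < 2 ^ r`,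
so `N_r(i) = S(i)` for `i ≤ 2 ^ r`.

With `q = n - 1`, `S(m) = S(⌈m/2⌉) + q S(⌊m/2⌋)`. Splitting `a`, `b` and `a + b` this way reduces
`S(b) + q S(a) ≤ S(a + b)` (for `a ≤ b`) to two smaller instances, which gives the theorem by
strong induction on `a + b`.
-/

open Finset Function

/-- The number of words in `{0, …, q} ^ k` (any `k` with `m ≤ 2 ^ k`) whose support, read as a
binary number, is below `m`. -/
def bitWeightSum (q m : ℕ) : ℕ := ∑ t ∈ range m, q ^ t.bitIndices.length

section BitWeightSum

variable (q : ℕ)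

lemma bitWeightSum_zero : bitWeightSum q 0 = 0 := rfl

lemma bitWeightSum_succ (m : ℕ) :
    bitWeightSum q (m + 1) = bitWeightSum q m + q ^ m.bitIndices.length :=
  sum_range_succ _ _

lemma bitWeightSum_two_mul (m : ℕ) : bitWeightSum q (2 * m) = (q + 1) * bitWeightSum q m := by
  induction m with
  | zero => rfl
  | succ m ih =>
    rw [mul_add, mul_one, show 2 * m + 2 = 2 * m + 1 + 1 by ring, bitWeightSum_succ,
      bitWeightSum_succ, ih, bitWeightSum_succ]
    simp only [Nat.bitIndices_two_mul_add_one, Nat.bitIndices_two_mul, List.length_cons,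
      List.length_map, pow_succ]
    ring

lemma bitWeightSum_two_mul_add_one (m : ℕ) :
    bitWeightSum q (2 * m + 1) = bitWeightSum q (m + 1) + q * bitWeightSum q m := by
  rw [bitWeightSum_succ, bitWeightSum_two_mul, bitWeightSum_succ, Nat.bitIndices_two_mul,
    List.length_map]
  ring

lemma bitWeightSum_eq_halves (m : ℕ) :
    bitWeightSum q m = bitWeightSum q ((m + 1) / 2) + q * bitWeightSum q (m / 2) := by
  obtain ⟨k, rfl | rfl⟩ := Nat.even_or_odd' m
  · rw [bitWeightSum_two_mul, show (2 * k + 1) / 2 = k by omega, Nat.mul_div_cancel_left k two_pos]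
    ring
  · rw [bitWeightSum_two_mul_add_one, show (2 * k + 1 + 1) / 2 = k + 1 by omega,
      show (2 * k + 1) / 2 = k by omega]

lemma bitWeightSum_mono : Monotone (bitWeightSum q) := fun _ _ h =>
  sum_le_sum_of_subset (range_subset_range.mpr h)

lemma bitWeightSum_strictMono {q : ℕ} (hq : 0 < q) : StrictMono (bitWeightSum q) :=
  strictMono_nat_of_lt_succ fun m => by
    rw [bitWeightSum_succ]
    exact Nat.lt_add_of_pos_right (pow_pos hq _)

lemma bitWeightSum_two_pow (k : ℕ) : bitWeightSum q (2 ^ k) = (q + 1) ^ k := by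
  induction k with
  | zero => rfl
  | succ k ih => rw [pow_succ', bitWeightSum_two_mul, ih, pow_succ']

lemma length_bitIndices_two_pow_add {k m : ℕ} (hm : m < 2 ^ k) :
    (2 ^ k + m).bitIndices.length = m.bitIndices.length + 1 := by
  induction k generalizing m with
  | zero =>
    obtain rfl : m = 0 := by omega
    rfl
  | succ k ih =>
    obtain ⟨m, rfl | rfl⟩ := Nat.even_or_odd' m
    · rw [pow_succ', ← mul_add]
      simp [ih (show m < 2 ^ k by omega)]
    · rw [pow_succ', show 2 * 2 ^ k + (2 * m + 1) = 2 * (2 ^ k + m) + 1 by ring]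
      simp [ih (show m < 2 ^ k by omega)]

lemma bitWeightSum_two_pow_add {k m : ℕ} (hm : m ≤ 2 ^ k) :
    bitWeightSum q (2 ^ k + m) = (q + 1) ^ k + q * bitWeightSum q m := by
  rw [bitWeightSum, sum_range_add, ← bitWeightSum, bitWeightSum_two_pow, bitWeightSum, mul_sum]
  congr 1
  refine sum_congr rfl fun t ht => ?_
  rw [length_bitIndices_two_pow_add (by simp at ht; omega), pow_succ']

theorem bitWeightSum_add_mul_bitWeightSum_le {q : ℕ} (hq : 1 ≤ q) {a b : ℕ} (hab : a ≤ b) :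
    bitWeightSum q b + q * bitWeightSum q a ≤ bitWeightSum q (a + b) := by
  induction hc : a + b using Nat.strong_induction_on generalizing a b with
  | _ c ih =>
  subst hc
  rcases Nat.eq_zero_or_pos a with rfl | ha
  · simp [bitWeightSum_zero]
  rcases hab.eq_or_lt with rfl | hlt
  · rw [bitWeightSum_eq_halves q (a + a), show (a + a + 1) / 2 = a by omega,
      show (a + a) / 2 = a by omega]
  rw [bitWeightSum_eq_halves q a, bitWeightSum_eq_halves q b, bitWeightSum_eq_halves q (a + b)]
  by_cases hodd : a % 2 = 1 ∧ b % 2 = 1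
  · -- Here the halves of `a + b` pair `⌈a/2⌉` with `⌊b/2⌋` and `⌊a/2⌋` with `⌈b/2⌉`;
    -- the swap costs `(q - 1) (S ⌈b/2⌉ - S ⌊b/2⌋) ≥ 0`.
    have h1 := ih _ (by omega) (show (a + 1) / 2 ≤ b / 2 by omega) rfl
    have h2 := ih _ (by omega) (show a / 2 ≤ (b + 1) / 2 by omega) rfl
    rw [show (a + b + 1) / 2 = (a + 1) / 2 + b / 2 by omega,
      show (a + b) / 2 = a / 2 + (b + 1) / 2 by omega]
    obtain ⟨p, rfl⟩ : ∃ p, q = p + 1 := ⟨q - 1, by omega⟩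
    have h3 := Nat.mul_le_mul_left (p + 1) h2
    have hswap := Nat.mul_le_mul_left p (bitWeightSum_mono (p + 1) (Nat.div_le_div_right
      (Nat.le_succ b) : b / 2 ≤ (b + 1) / 2))
    linarith
  · have h1 := ih _ (by omega) (show (a + 1) / 2 ≤ (b + 1) / 2 by omega) rfl
    have h2 := ih _ (by omega) (show a / 2 ≤ b / 2 by omega) rfl
    have h3 := Nat.mul_le_mul_left q h2
    rw [show (a + b + 1) / 2 = (a + 1) / 2 + (b + 1) / 2 by omega,
      show (a + b) / 2 = a / 2 + b / 2 by omega]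
    linarith

end BitWeightSum

/-- The number with binary digits `σ₁ ⋯ σₘ 1 0 ⋯ 0` (`true` as `1`), where `σ₁` has weight
`2 ^ k`. -/
def condIndex : ℕ → List Bool → ℕ
  | k, [] => 2 ^ k
  | k, b :: s => cond b (2 ^ k) 0 + condIndex (k - 1) s

lemma condIndex_pos (k : ℕ) (s : List Bool) : 0 < condIndex k s := by
  induction s generalizing k with
  | nil => exact Nat.two_pow_pos k
  | cons b s ih => exact Nat.add_pos_right _ (ih _)

lemma condIndex_lt {k : ℕ} {s : List Bool} (hs : s.length ≤ k) : condIndex k s < 2 ^ (k + 1) := by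
  induction s generalizing k with
  | nil => exact Nat.pow_lt_pow_succ one_lt_two
  | cons b s ih =>
    have h := ih (k := k - 1) (by simp at hs; omega)
    rw [Nat.sub_add_cancel (by simp at hs; omega)] at h
    cases b <;> simp only [condIndex, cond_true, cond_false, pow_succ] <;> omega

lemma exists_condIndex_eq {k m : ℕ} (hm0 : 0 < m) (hm : m < 2 ^ (k + 1)) :
    ∃ s : List Bool, s.length ≤ k ∧ condIndex k s = m := by
  induction k generalizing m with
  | zero => exact ⟨[], le_rfl, by simp [condIndex]; omega⟩
  | succ k ih =>
    rw [pow_succ] at hm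
    rcases lt_trichotomy m (2 ^ (k + 1)) with hlt | rfl | hgt
    · obtain ⟨s, hs, rfl⟩ := ih hm0 hlt
      exact ⟨false :: s, by simpa using hs, by simp [condIndex]⟩
    · exact ⟨[], by simp, rfl⟩
    · obtain ⟨s, hs, hsm⟩ := ih (m := m - 2 ^ (k + 1)) (by omega) (by omega)
      exact ⟨true :: s, by simpa using hs, by simp [condIndex, hsm]; omega⟩

section Counting

variable {n r : ℕ}

lemma mul_card_filter_and_apply_eq (p : Fin r) {Q : (Fin r → Fin n) → Prop} [DecidablePred Q]
    (hQ : ∀ e x, Q (update e p x) ↔ Q e) (v : Fin n) :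
    n * #{e | Q e ∧ e p = v} = #{e | Q e} := by
  have fiber_eq : ∀ w, #{e | Q e ∧ e p = w} = #{e | Q e ∧ e p = v} := fun w =>
    card_nbij' (update · p v) (update · p w)
      (fun e he => by simp_all)
      (fun e he => by simp_all)
      (fun e he => by simp_all [update_idem, ← (mem_filter.mp he).2.2])
      (fun e he => by simp_all [update_idem, ← (mem_filter.mp he).2.2])
  symm
  rw [card_eq_sum_card_fiberwise (f := (· p)) (t := univ) fun _ _ => mem_univ _]
  simp only [filter_filter, fiber_eq, sum_const, card_univ, Fintype.card_fin, smul_eq_mul]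

lemma vcond_eq_true_iff [NeZero n] (e : Fin r → Fin n) {j : ℕ} (hj : j < r) :
    vcond e j = true ↔ e ⟨j, hj⟩ = 0 := by
  rw [vcond, dif_pos hj, decide_eq_true_iff, Fin.ext_iff, Fin.val_zero]

lemma vcond_update (e : Fin r → Fin n) {p : Fin r} (x : Fin n) {j : ℕ} (hpj : (p : ℕ) ≠ j) :
    vcond (update e p x) j = vcond e j := by
  unfold vcond
  split_ifs with hj
  · rw [update_of_ne (by rintro rfl; exact hpj rfl)]
  · rfl

lemma edgeCond_update (e : Fin r → Fin n) {p : Fin r} (x : Fin n) (s : List Bool) {j : ℕ}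
    (hpj : (p : ℕ) < j) : edgeCond (update e p x) j s = edgeCond e j s := by
  induction s generalizing j with
  | nil => exact vcond_update e x hpj.ne
  | cons b s ih =>
    cases b <;> simp only [edgeCond, vcond_update e x hpj.ne, ih (Nat.lt_succ_of_lt hpj)]

lemma mul_card_filter_vcond_and [NeZero n] {j : ℕ} (hj : j < r) {Q : (Fin r → Fin n) → Prop}
    [DecidablePred Q] (hQ : ∀ e x, Q (update e ⟨j, hj⟩ x) ↔ Q e) :
    n * #{e | vcond e j = true ∧ Q e} = #{e | Q e} := by
  simp_rw [vcond_eq_true_iff _ hj, and_comm (a := _ = _)]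
  exact mul_card_filter_and_apply_eq _ hQ 0

lemma card_filter_vcond [NeZero n] {j : ℕ} (hj : j < r) :
    #{e : Fin r → Fin n | vcond e j = true} = n ^ (r - 1) := by
  have h := mul_card_filter_vcond_and (n := n) (Q := fun _ => True) hj fun _ _ => Iff.rfl
  simp only [and_true, filter_true_of_mem fun _ _ => trivial, card_univ, Fintype.card_fun,
    Fintype.card_fin] at h
  rw [← mul_pow_sub_one (show r ≠ 0 by omega)] at h
  exact Nat.eq_of_mul_eq_mul_left (Nat.pos_of_neZero n) h

lemma mul_card_filter_vcond_or [NeZero n] {j : ℕ} (hj : j < r) {Q : (Fin r → Fin n) → Prop}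
    [DecidablePred Q] (hQ : ∀ e x, Q (update e ⟨j, hj⟩ x) ↔ Q e) :
    n * #{e | vcond e j = true ∨ Q e} = n ^ r + (n - 1) * #{e | Q e} := by
  have inclusion_exclusion := card_union_add_card_inter
    ({e | vcond e j = true} : Finset (Fin r → Fin n)) {e | Q e}
  rw [← filter_or, ← filter_and, card_filter_vcond hj] at inclusion_exclusion
  have hand := mul_card_filter_vcond_and hj hQ
  have hpow := mul_pow_sub_one (show r ≠ 0 by omega) n
  obtain ⟨q, rfl⟩ : ∃ q, n = q + 1 := ⟨n - 1, (Nat.sub_add_cancel (Nat.pos_of_neZero n)).symm⟩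
  rw [Nat.add_sub_cancel]
  nlinarith

lemma card_filter_edgeCond [NeZero n] {j : ℕ} {s : List Bool} (hs : j + s.length < r) :
    #{e : Fin r → Fin n | edgeCond e j s = true}
      = n ^ j * bitWeightSum (n - 1) (condIndex (r - 1 - j) s) := by
  have hn : n - 1 + 1 = n := Nat.sub_add_cancel (Nat.pos_of_neZero n)
  induction s generalizing j with
  | nil =>
    simp only [List.length_nil, add_zero] at hs
    refine (card_filter_vcond hs).trans ?_
    rw [condIndex, bitWeightSum_two_pow, hn, ← pow_add]
    congr 1
    omega
  | cons b s ih =>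
    simp only [List.length_cons] at hs
    have hj : j < r := by omega
    have ih := ih (j := j + 1) (by omega)
    obtain ⟨k, hk⟩ : ∃ k, r - 1 - j = k + 1 := ⟨r - 1 - j - 1, by omega⟩
    rw [show r - 1 - (j + 1) = k by omega] at ih
    have hQ (e : Fin r → Fin n) (x : Fin n) :
        edgeCond (update e ⟨j, hj⟩ x) (j + 1) s = true ↔ edgeCond e (j + 1) s = true := by
      rw [edgeCond_update e x s (Nat.lt_succ_self j)]
    refine Nat.eq_of_mul_eq_mul_left (Nat.pos_of_neZero n) ?_
    cases b
    · simp only [edgeCond, Bool.and_eq_true]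
      rw [mul_card_filter_vcond_and hj hQ, ih, hk, condIndex, cond_false, zero_add,
        Nat.add_sub_cancel, pow_succ]
      ring
    · simp only [edgeCond, Bool.or_eq_true]
      rw [mul_card_filter_vcond_or hj hQ, ih, hk, condIndex, cond_true, Nat.add_sub_cancel,
        bitWeightSum_two_pow_add _ (condIndex_lt (by omega)).le, hn,
        show r = j + (k + 1) + 1 by omega, pow_succ, pow_add]
      ring

lemma fval_eq_bitWeightSum [NeZero n] {σ : List Bool} (hσ : σ.length < r) :
    fval n r σ = bitWeightSum (n - 1) (condIndex (r - 1) σ) := by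
  rw [fval, Fset, card_filter_edgeCond (by simpa using hσ), pow_zero, one_mul, Nat.sub_zero]

end Counting

lemma mem_PsiSet {r : ℕ} {σ : List Bool} : σ ∈ PsiSet r ↔ σ.length < r := by
  simp only [PsiSet, mem_biUnion, mem_range, mem_image, mem_univ, true_and]
  constructor
  · rintro ⟨m, hm, g, rfl⟩
    simpa using hm
  · intro h
    exact ⟨σ.length, h, σ.get, List.ofFn_get σ⟩

lemma image_condIndex_PsiSet (r : ℕ) : (PsiSet r).image (condIndex (r - 1)) = Ioo 0 (2 ^ r) := by
  ext m
  simp only [mem_image, mem_PsiSet, mem_Ioo]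
  constructor
  · rintro ⟨σ, hσ, rfl⟩
    have h := condIndex_lt (k := r - 1) (s := σ) (by omega)
    rw [Nat.sub_add_cancel (by omega)] at h
    exact ⟨condIndex_pos _ _, h⟩
  · rintro ⟨h0, hm⟩
    have hr : r - 1 + 1 = r := Nat.sub_add_cancel (Nat.pos_of_ne_zero (by rintro rfl; omega))
    obtain ⟨σ, hσ, rfl⟩ := exists_condIndex_eq (k := r - 1) h0 (by rwa [hr])
    exact ⟨σ, by omega, rfl⟩

lemma Nvals_eq_image_bitWeightSum {n r : ℕ} [NeZero n] :
    Nvals n r = (range (2 ^ r + 1)).image (bitWeightSum (n - 1)) := by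
  have hrange : range (2 ^ r + 1) = insert 0 (insert (2 ^ r) (Ioo 0 (2 ^ r))) := by
    ext m
    simp only [mem_range, mem_insert, mem_Ioo]
    have := Nat.two_pow_pos r
    omega
  have hfval : (PsiSet r).image (fval n r) = (Ioo 0 (2 ^ r)).image (bitWeightSum (n - 1)) := by
    rw [← image_condIndex_PsiSet, image_image]
    exact image_congr fun σ hσ => fval_eq_bitWeightSum (mem_PsiSet.mp hσ)
  rw [Nvals, hfval, hrange, image_insert, image_insert, bitWeightSum_zero, bitWeightSum_two_pow,
    Nat.sub_add_cancel (Nat.pos_of_neZero n)]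

lemma Nseq_eq_bitWeightSum {n r i : ℕ} (hn : 2 ≤ n) (hi : i ≤ 2 ^ r) :
    Nseq n r i = bitWeightSum (n - 1) i := by
  have : NeZero n := ⟨by omega⟩
  have hmono := bitWeightSum_strictMono (q := n - 1) (by omega)
  have himage : (range (2 ^ r + 1)).image (bitWeightSum (n - 1))
      = (range (2 ^ r + 1)).map ⟨_, hmono.injective⟩ :=
    (map_eq_image ⟨bitWeightSum (n - 1), hmono.injective⟩ _).symm
  rw [Nseq, Nvals_eq_image_bitWeightSum, himage, ← (hmono.strictMonoOn _).map_finsetSort,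
    sort_range, List.getD_eq_getElem?_getD, List.getElem?_map, List.getElem?_range (by omega)]
  rfl

theorem stmt7 (n r i j : ℕ) (hn : 2 ≤ n) (hij : i ≤ j) (hsum : i + j ≤ 2 ^ r) :
    ((n : ℤ) - 1) * (Nseq n r i : ℤ) ≤ (Nseq n r (j + i) : ℤ) - (Nseq n r j : ℤ) := by
  have key := bitWeightSum_add_mul_bitWeightSum_le (q := n - 1) (by omega) hij
  rw [Nseq_eq_bitWeightSum hn (by omega), Nseq_eq_bitWeightSum hn (by omega),
    Nseq_eq_bitWeightSum hn (by omega), add_comm j i]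
  zify [show 1 ≤ n by omega] at key
  linarith
end

section
/- If F_1, F_2 ⊆ [n]^r satisfy |F_1| > n^{r−1} and |F_2| ≥ n^{r−1}, then there exist e_1 ∈ F_1 and e_2 ∈ F_2 that are disjoint. -/
/-!
Hoffman's ratio bound for cross-intersecting families. The disjointness matrix of `[n]^r` is
`D = (J - I)^{⊗r}`; it is diagonalised by the `2^r` projections
`P_S = (J/n)^{⊗S} ⊗ (I - J/n)^{⊗Sᶜ}`, with eigenvalue `(n-1)^|S| (-1)^|Sᶜ|` on the image of `P_S`.
If `A`, `B` are cross-intersecting then `1_Aᵀ D 1_B = 0`. The term `S = univ` contributes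
`(n-1)^r |A||B| / n^r`, while by Cauchy–Schwarz and Parseval the other terms are at most
`(n-1)^(r-1) √(|A| - |A|²/n^r) √(|B| - |B|²/n^r)`. This gives
`(n-1)² |A|²|B|² ≤ |A|(n^r - |A|) |B|(n^r - |B|)`,
which fails once `|A| > n^(r-1)` and `|B| ≥ n^(r-1)`.
-/

open Finset

namespace PartiteCube

lemma sq_sum_mul_sum_mul_le {R κ V : Type*} [CommRing R] [LinearOrder R] [IsStrictOrderedRing R]
    [Fintype V] (s : Finset κ) (w : κ → R) {μ : R} (hw : ∀ k ∈ s, |w k| ≤ μ) (u v : κ → V → R) :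
    (∑ k ∈ s, w k * ∑ x, u k x * v k x) ^ 2 ≤
      μ ^ 2 * (∑ k ∈ s, ∑ x, u k x ^ 2) * ∑ k ∈ s, ∑ x, v k x ^ 2 := by
  have hw2 : ∀ k ∈ s, w k ^ 2 ≤ μ ^ 2 := fun k hk => by
    simpa only [sq_abs] using pow_le_pow_left₀ (abs_nonneg _) (hw k hk) 2
  calc (∑ k ∈ s, w k * ∑ x, u k x * v k x) ^ 2
      = (∑ p ∈ s ×ˢ univ, (w p.1 * u p.1 p.2) * v p.1 p.2) ^ 2 := by
        simp only [sum_product, mul_sum, mul_assoc]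
    _ ≤ (∑ p ∈ s ×ˢ univ, (w p.1 * u p.1 p.2) ^ 2) * ∑ p ∈ s ×ˢ univ, v p.1 p.2 ^ 2 :=
        sum_mul_sq_le_sq_mul_sq _ _ _
    _ ≤ (∑ p ∈ s ×ˢ univ, μ ^ 2 * u p.1 p.2 ^ 2) * ∑ p ∈ s ×ˢ univ, v p.1 p.2 ^ 2 := by
        gcongr with p hp
        rw [mul_pow]
        exact mul_le_mul_of_nonneg_right (hw2 _ (mem_product.1 hp).1) (sq_nonneg _)
    _ = _ := by simp only [sum_product, ← mul_sum]

lemma mul_sub_mul_mul_sub_lt {n m a b : ℤ} (hn : 2 ≤ n) (hm : 1 ≤ m) (ha : m < a) (hb : m ≤ b)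
    (haN : a ≤ n * m) (hbN : b ≤ n * m) :
    a * (n * m - a) * (b * (n * m - b)) < (n - 1) ^ 2 * (a * b) ^ 2 := by
  have hX : n * m - a ≤ (n - 1) * a - 1 := by nlinarith
  have hY : n * m - b ≤ (n - 1) * b := by nlinarith
  have hXY : (n * m - a) * (n * m - b) ≤ ((n - 1) * a - 1) * ((n - 1) * b) :=
    mul_le_mul hX hY (by linarith) (by nlinarith)
  have hab : 0 < a * b := by nlinarith
  have hgap : 0 < (n - 1) * b * (a * b) := by nlinarith
  nlinarith [mul_le_mul_of_nonneg_left hXY hab.le]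

variable {α ι : Type*} [Fintype α] [DecidableEq α]

/-- `n • (I - J/n)` on `α`, where `n = card α`. -/
def centeredDelta (a b : α) : ℤ := (if a = b then (Fintype.card α : ℤ) else 0) - 1

lemma centeredDelta_comm (a b : α) : centeredDelta a b = centeredDelta b a := by
  simp only [centeredDelta, eq_comm]

lemma sum_centeredDelta_mul (a b : α) :
    ∑ y, centeredDelta a y * centeredDelta y b = Fintype.card α * centeredDelta a b := by
  simp only [centeredDelta, sub_mul, mul_sub, ite_mul, mul_ite, mul_one, one_mul, mul_zero,
    zero_mul, sum_sub_distrib, Fintype.sum_ite_eq, Fintype.sum_ite_eq', sum_const, card_univ,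
    nsmul_eq_mul]
  split_ifs <;> ring

variable [Fintype ι] [DecidableEq ι]

/-- `n^r • P_S`, written with integer entries. -/
def projKernel (S : Finset ι) (e f : ι → α) : ℤ := ∏ i ∈ Sᶜ, centeredDelta (e i) (f i)

lemma projKernel_comm (S : Finset ι) (e f : ι → α) : projKernel S e f = projKernel S f e := by
  simp only [projKernel, centeredDelta_comm (e _)]

lemma projKernel_univ (e f : ι → α) : projKernel univ e f = 1 := by
  simp [projKernel]

lemma sum_projKernel_mul (S : Finset ι) (e f : ι → α) :
    ∑ x, projKernel S e x * projKernel S x f =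
      Fintype.card α ^ Fintype.card ι * projKernel S e f := by
  set k : ι → α → α → ℤ := fun i a b => if i ∈ Sᶜ then centeredDelta a b else 1
  have hk : ∀ e f, projKernel S e f = ∏ i, k i (e i) (f i) := fun e f =>
    (Fintype.prod_ite_mem _ _).symm
  have hcoord : ∀ i, ∑ y, k i (e i) y * k i y (f i) = Fintype.card α * k i (e i) (f i) := by
    intro i
    simp only [k]
    split_ifs
    · exact sum_centeredDelta_mul _ _
    · simp
  simp only [hk, ← prod_mul_distrib]
  rw [← Fintype.prod_sum fun i y => k i (e i) y * k i y (f i), prod_congr rfl fun i _ => hcoord i,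
    prod_mul_distrib, prod_const, card_univ]

lemma sum_projKernel (e f : ι → α) :
    ∑ S, projKernel S e f = if e = f then (Fintype.card α : ℤ) ^ Fintype.card ι else 0 := by
  have hcoord : ∀ i, 1 + centeredDelta (e i) (f i) =
      if e i = f i then (Fintype.card α : ℤ) else 0 := by
    intro i; simp [centeredDelta]
  calc ∑ S, projKernel S e f = ∏ i, (1 + centeredDelta (e i) (f i)) := by
        simp [projKernel, Fintype.prod_add]
    _ = _ := by
        simp only [hcoord, Fintype.prod_ite_zero, prod_const, card_univ, funext_iff]

def eigenvalue (n : ℤ) (S : Finset ι) : ℤ := (n - 1) ^ #S * (-1) ^ #Sᶜ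

lemma sum_eigenvalue_mul_projKernel (e f : ι → α) :
    ∑ S, eigenvalue (Fintype.card α) S * projKernel S e f =
      (Fintype.card α : ℤ) ^ Fintype.card ι * if ∀ i, e i ≠ f i then 1 else 0 := by
  have hcoord : ∀ i, ((Fintype.card α : ℤ) - 1) + -centeredDelta (e i) (f i) =
      Fintype.card α * if e i ≠ f i then 1 else 0 := by
    intro i; by_cases h : e i = f i <;> simp [centeredDelta, h]
  calc ∑ S, eigenvalue (Fintype.card α) S * projKernel S e f
      = ∏ i, (((Fintype.card α : ℤ) - 1) + -centeredDelta (e i) (f i)) := by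
        simp [eigenvalue, projKernel, Fintype.prod_add, prod_neg, mul_assoc]
    _ = _ := by
        simp only [hcoord, prod_mul_distrib, prod_const, card_univ, Fintype.prod_boole]

def CrossIntersecting (A B : Finset (ι → α)) : Prop := ∀ e ∈ A, ∀ f ∈ B, ∃ i, e i = f i

/-- `n^r • 1_Aᵀ P_S 1_B`. -/
def pairing (S : Finset ι) (A B : Finset (ι → α)) : ℤ := ∑ e ∈ A, ∑ f ∈ B, projKernel S e f

/-- `n^r • P_S 1_A`. -/
def project (S : Finset ι) (A : Finset (ι → α)) (x : ι → α) : ℤ := ∑ e ∈ A, projKernel S e x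

lemma card_pow_mul_pairing (S : Finset ι) (A B : Finset (ι → α)) :
    Fintype.card α ^ Fintype.card ι * pairing S A B = ∑ x, project S A x * project S B x := by
  calc Fintype.card α ^ Fintype.card ι * pairing S A B
      = ∑ e ∈ A, ∑ f ∈ B, ∑ x, projKernel S e x * projKernel S x f := by
        simp only [pairing, mul_sum, sum_projKernel_mul]
    _ = ∑ e ∈ A, ∑ x, ∑ f ∈ B, projKernel S e x * projKernel S x f :=
        sum_congr rfl fun _ _ => sum_comm
    _ = ∑ x, ∑ e ∈ A, ∑ f ∈ B, projKernel S e x * projKernel S x f := sum_comm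
    _ = ∑ x, project S A x * project S B x := by
        simp only [project, sum_mul_sum, projKernel_comm S _ (f := _)]

lemma sum_pairing_self (A : Finset (ι → α)) :
    ∑ S, pairing S A A = Fintype.card α ^ Fintype.card ι * #A := by
  simp only [pairing]
  rw [sum_comm]
  simp_rw [sum_comm (s := univ), sum_projKernel]
  simp [mul_comm]

lemma pairing_univ (A B : Finset (ι → α)) : pairing univ A B = #A * #B := by
  simp [pairing, projKernel_univ]

lemma CrossIntersecting.sum_eigenvalue_mul_pairing_eq_zero {A B : Finset (ι → α)}
    (hAB : CrossIntersecting A B) :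
    ∑ S, eigenvalue (Fintype.card α) S * pairing S A B = 0 := by
  simp only [pairing, mul_sum]
  rw [sum_comm]
  refine sum_eq_zero fun e he => ?_
  rw [sum_comm]
  refine sum_eq_zero fun f hf => ?_
  obtain ⟨i, hi⟩ := hAB e he f hf
  rw [sum_eigenvalue_mul_projKernel, if_neg fun h => h i hi, mul_zero]

lemma abs_eigenvalue_le {n : ℤ} (hn : 2 ≤ n) {S : Finset ι} (hS : S ≠ univ) :
    |eigenvalue n S| ≤ (n - 1) ^ (Fintype.card ι - 1) := by
  have hcard : #S ≤ Fintype.card ι - 1 := by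
    have := card_lt_card (ssubset_univ_iff.2 hS)
    rw [card_univ] at this
    omega
  rw [eigenvalue, abs_mul, abs_pow, abs_pow, abs_neg, abs_one, one_pow, mul_one,
    abs_of_nonneg (by linarith)]
  exact pow_le_pow_right₀ (by linarith) hcard

theorem CrossIntersecting.hoffman_bound [Nonempty ι] (hn : 2 ≤ Fintype.card α)
    {A B : Finset (ι → α)} (hAB : CrossIntersecting A B) :
    ((Fintype.card α : ℤ) - 1) ^ 2 * (#A * #B) ^ 2 ≤
      #A * ((Fintype.card α : ℤ) ^ Fintype.card ι - #A) *
        (#B * ((Fintype.card α : ℤ) ^ Fintype.card ι - #B)) := by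
  have hn' : (2 : ℤ) ≤ Fintype.card α := by exact_mod_cast hn
  set n : ℤ := (Fintype.card α : ℤ)
  set N : ℤ := n ^ Fintype.card ι
  set μ : ℤ := (n - 1) ^ (Fintype.card ι - 1)
  set T : Finset (Finset ι) := univ.erase univ
  have hμ : 0 < μ := pow_pos (by linarith) _
  have hN : 0 < N := by positivity
  have htop : eigenvalue n (univ : Finset ι) = (n - 1) * μ := by
    rw [eigenvalue, compl_univ, card_empty, pow_zero, mul_one, card_univ, ← pow_succ',
      Nat.sub_add_cancel (Fintype.card_pos (α := ι))]
  have hrest :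
      ∑ S ∈ T, eigenvalue n S * (N * pairing S A B) = -(N * ((n - 1) * μ * (#A * #B))) := by
    have h := hAB.sum_eigenvalue_mul_pairing_eq_zero
    rw [← add_sum_erase _ _ (mem_univ univ), htop, pairing_univ] at h
    simp only [mul_left_comm _ N, ← mul_sum]
    linear_combination N * h
  have hnorm : ∀ C : Finset (ι → α),
      ∑ S ∈ T, ∑ x, project S C x ^ 2 = N * (#C * (N - #C)) := by
    intro C
    have h := sum_pairing_self C
    rw [← add_sum_erase _ _ (mem_univ univ), pairing_univ] at h
    simp only [sq, ← card_pow_mul_pairing, ← mul_sum]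
    linear_combination N * h
  have hCS : (∑ S ∈ T, eigenvalue n S * (N * pairing S A B)) ^ 2 ≤
      μ ^ 2 * (∑ S ∈ T, ∑ x, project S A x ^ 2) * ∑ S ∈ T, ∑ x, project S B x ^ 2 := by
    have h := sq_sum_mul_sum_mul_le T (eigenvalue n)
      (fun S hS => abs_eigenvalue_le hn' (ne_of_mem_erase hS)) (project · A) (project · B)
    simp only [← card_pow_mul_pairing] at h
    exact h
  rw [hrest, hnorm, hnorm] at hCS
  have hpos : 0 < (N * μ) ^ 2 := by positivity
  refine le_of_mul_le_mul_left ?_ hpos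
  linear_combination hCS

theorem exists_disjoint_of_pow_lt_card [Nonempty ι] (hn : 2 ≤ Fintype.card α)
    {A B : Finset (ι → α)} (hA : Fintype.card α ^ (Fintype.card ι - 1) < #A)
    (hB : Fintype.card α ^ (Fintype.card ι - 1) ≤ #B) :
    ∃ e ∈ A, ∃ f ∈ B, ∀ i, e i ≠ f i := by
  by_contra! hAB
  have hN : (Fintype.card α : ℤ) ^ Fintype.card ι =
      Fintype.card α * Fintype.card α ^ (Fintype.card ι - 1) := by
    rw [← pow_succ', Nat.sub_add_cancel (Fintype.card_pos (α := ι))]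
  have hcard : ∀ C : Finset (ι → α), (#C : ℤ) ≤ Fintype.card α ^ Fintype.card ι := fun C => by
    exact_mod_cast (card_le_univ C).trans_eq (by simp)
  have hlt := mul_sub_mul_mul_sub_lt (n := Fintype.card α) (by exact_mod_cast hn)
    (one_le_pow₀ (by exact_mod_cast hn.trans' one_le_two)) (by exact_mod_cast hA)
    (by exact_mod_cast hB) (hN ▸ hcard A) (hN ▸ hcard B)
  rw [← hN] at hlt
  exact hlt.not_ge (CrossIntersecting.hoffman_bound hn hAB)

end PartiteCube

open PartiteCube in
theorem stmt10 (n r : ℕ) (F₁ F₂ : Finset (Fin r → Fin n))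
    (h1 : n ^ (r - 1) < F₁.card) (h2 : n ^ (r - 1) ≤ F₂.card) :
    ∃ e₁ ∈ F₁, ∃ e₂ ∈ F₂, ∀ i, e₁ i ≠ e₂ i := by
  have hlt : n ^ (r - 1) < n ^ r := h1.trans_le (by simpa using F₁.card_le_univ)
  have hn : 2 ≤ n := by
    by_contra! hn
    exact hlt.not_ge (pow_le_pow_of_le_one (Nat.zero_le n) (by omega) (Nat.sub_le r 1))
  have hr : r ≠ 0 := by
    rintro rfl
    simp at hlt
  have : Nonempty (Fin r) := ⟨⟨0, Nat.pos_of_ne_zero hr⟩⟩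
  exact exists_disjoint_of_pow_lt_card (by simpa using hn) (by simpa using h1) (by simpa using h2)
end

section
/- If F_1, F_2 ⊆ [n]^r satisfy |F_1|·|F_2| > n^{2(r−1)}, then there exist e_1 ∈ F_1 and e_2 ∈ F_2 that are disjoint. -/
/-!
The disjointness kernel `D x y = ∏ᵢ [xᵢ ≠ yᵢ]` on `[n]^r` is the `r`-th tensor power of `J - I`.
Splitting `ℝ^[n] = constants ⊕ mean-zero functions` in every coordinate decomposes `ℝ^([n]^r)`
into orthogonal eigenspaces indexed by the sets `S` of coordinates on which the functions are
constant, with eigenvalue `(n-1)^|S| (-1)^(r-|S|)`. For cross-intersecting `F₁, F₂` we have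
`⟨1_{F₁}, D 1_{F₂}⟩ = 0`. The top eigenspace `S = [r]` contributes `(n-1)^r |F₁||F₂| / n^r`;
by Cauchy–Schwarz all the others together contribute at most
`(n-1)^(r-1) √(|F₁|(n^r-|F₁|)) √(|F₂|(n^r-|F₂|)) / n^r` in absolute value.
Comparing the two and using AM–GM gives `n √(|F₁||F₂|) ≤ n^r`.
-/

open Finset

namespace PartiteHypergraph

section Expansion

variable {ι R : Type*} [Fintype ι] [DecidableEq ι] [CommSemiring R]

lemma prod_ite_mem_eq_mul (S : Finset ι) (f g : ι → R) :
    ∏ i, (if i ∈ S then f i else g i) = (∏ i ∈ S, f i) * ∏ i ∈ Sᶜ, g i := by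
  rw [prod_ite, filter_mem_eq_inter, univ_inter, ← compl_filter, filter_mem_eq_inter, univ_inter]

lemma sum_prod_ite_mem (f g : ι → R) :
    ∑ S : Finset ι, ∏ i, (if i ∈ S then f i else g i) = ∏ i, (f i + g i) := by
  simp_rw [prod_ite_mem_eq_mul, Fintype.prod_add]

end Expansion

section Projection

variable {β : Type*} [Fintype β] {K : β → β → ℝ}

lemma sum_sum_eq_sum_mul_sum_of_idempotent (hK : ∀ x y, K x y = K y x)
    (hKK : ∀ x y, ∑ z, K x z * K z y = K x y) (F G : Finset β) :
    ∑ x ∈ F, ∑ y ∈ G, K x y = ∑ z, (∑ x ∈ F, K z x) * ∑ y ∈ G, K z y := by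
  calc ∑ x ∈ F, ∑ y ∈ G, K x y = ∑ x ∈ F, ∑ y ∈ G, ∑ z, K z x * K z y :=
        sum_congr rfl fun x _ => sum_congr rfl fun y _ => by simp_rw [← hKK x y, hK x]
    _ = ∑ x ∈ F, ∑ z, ∑ y ∈ G, K z x * K z y := sum_congr rfl fun x _ => sum_comm
    _ = ∑ z, (∑ x ∈ F, K z x) * ∑ y ∈ G, K z y := by
        rw [sum_comm]
        simp_rw [sum_mul_sum]

lemma sq_sum_sum_le_of_idempotent (hK : ∀ x y, K x y = K y x)
    (hKK : ∀ x y, ∑ z, K x z * K z y = K x y) (F G : Finset β) :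
    (∑ x ∈ F, ∑ y ∈ G, K x y) ^ 2 ≤
      (∑ x ∈ F, ∑ y ∈ F, K x y) * ∑ x ∈ G, ∑ y ∈ G, K x y := by
  simp only [sum_sum_eq_sum_mul_sum_of_idempotent hK hKK, ← sq]
  exact sum_mul_sq_le_sq_mul_sq _ _ _

lemma sum_sum_self_nonneg_of_idempotent (hK : ∀ x y, K x y = K y x)
    (hKK : ∀ x y, ∑ z, K x z * K z y = K x y) (F : Finset β) :
    0 ≤ ∑ x ∈ F, ∑ y ∈ F, K x y := by
  rw [sum_sum_eq_sum_mul_sum_of_idempotent hK hKK]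
  exact sum_nonneg fun z _ => mul_self_nonneg _

end Projection

lemma mul_sq_mul_le_sq_of_le_sqrt {p q n N : ℝ} (hp : 0 ≤ p) (hpN : p ≤ N) (hq : 0 ≤ q)
    (hqN : q ≤ N) (hn : 1 ≤ n) (h : (n - 1) * (p * q) ≤ √(p * (N - p)) * √(q * (N - q))) :
    n ^ 2 * (p * q) ≤ N ^ 2 := by
  obtain ⟨u, hu, rfl⟩ : ∃ u, 0 ≤ u ∧ u ^ 2 = p := ⟨√p, Real.sqrt_nonneg p, Real.sq_sqrt hp⟩
  obtain ⟨v, hv, rfl⟩ : ∃ v, 0 ≤ v ∧ v ^ 2 = q := ⟨√q, Real.sqrt_nonneg q, Real.sq_sqrt hq⟩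
  have hN : 0 ≤ N := hp.trans hpN
  have hsqrt : √(N - u ^ 2) * √(N - v ^ 2) ≤ N - u * v := by
    rw [← Real.sqrt_mul (sub_nonneg.mpr hpN)]
    refine Real.sqrt_le_iff.mpr ⟨by nlinarith [sq_nonneg (u - v)], ?_⟩
    nlinarith [mul_nonneg hN (sq_nonneg (u - v))]
  have key : (n - 1) * (u * v) ^ 2 ≤ u * v * (N - u * v) := by
    calc (n - 1) * (u * v) ^ 2 = (n - 1) * (u ^ 2 * v ^ 2) := by ring
      _ ≤ √(u ^ 2 * (N - u ^ 2)) * √(v ^ 2 * (N - v ^ 2)) := h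
      _ = u * v * (√(N - u ^ 2) * √(N - v ^ 2)) := by
        rw [Real.sqrt_mul (sq_nonneg u), Real.sqrt_mul (sq_nonneg v), Real.sqrt_sq hu,
          Real.sqrt_sq hv]
        ring
      _ ≤ u * v * (N - u * v) := mul_le_mul_of_nonneg_left hsqrt (mul_nonneg hu hv)
  rcases (mul_nonneg hu hv).eq_or_lt with huv | huv
  · rw [← mul_pow, ← huv]
    simpa using sq_nonneg N
  have : n * (u * v) ≤ N := by nlinarith
  nlinarith [mul_nonneg (by linarith : (0:ℝ) ≤ n) huv.le]

def CrossIntersecting {ι α : Type*} (F G : Finset (ι → α)) : Prop :=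
  ∀ x ∈ F, ∀ y ∈ G, ∃ i, x i = y i

variable {ι α : Type*} [Fintype ι] [DecidableEq ι] [Fintype α]

variable (α) in
/-- The eigenvalue of the disjointness kernel on the range of `projKernel S`. -/
noncomputable def disjEigenvalue (S : Finset ι) : ℝ :=
  ∏ i, if i ∈ S then (Fintype.card α : ℝ) - 1 else -1

lemma abs_disjEigenvalue [Nonempty α] (S : Finset ι) :
    |disjEigenvalue α S| = ((Fintype.card α : ℝ) - 1) ^ #S := by
  have hn : (1 : ℝ) ≤ Fintype.card α := Nat.one_le_cast.mpr Fintype.card_pos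
  simp_rw [disjEigenvalue, abs_prod, apply_ite abs, abs_neg, abs_one,
    abs_of_nonneg (sub_nonneg.mpr hn), Fintype.prod_ite_mem, prod_const]

lemma disjEigenvalue_univ :
    disjEigenvalue α (univ : Finset ι) = ((Fintype.card α : ℝ) - 1) ^ Fintype.card ι := by
  simp [disjEigenvalue]

variable [DecidableEq α]

noncomputable def centeredKernel (u v : α) : ℝ :=
  (if u = v then 1 else 0) - (Fintype.card α : ℝ)⁻¹

lemma centeredKernel_comm (u v : α) : centeredKernel u v = centeredKernel v u := by
  simp [centeredKernel, eq_comm]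

lemma sum_centeredKernel_mul [Nonempty α] (u v : α) :
    ∑ a, centeredKernel u a * centeredKernel a v = centeredKernel u v := by
  have hn : (Fintype.card α : ℝ) ≠ 0 := Nat.cast_ne_zero.mpr Fintype.card_ne_zero
  simp only [centeredKernel, sub_mul, mul_sub, ite_mul, mul_ite, one_mul, mul_one, mul_zero,
    zero_mul, sum_sub_distrib, sum_ite_eq, sum_ite_eq', mem_univ, if_true, sum_const,
    card_univ, nsmul_eq_mul]
  field_simp
  ring

/-- The kernel of the orthogonal projection of `ℝ^(ι → α)` onto the tensor product of the
constants in the coordinates `i ∈ S` and of the mean-zero functions in the others. -/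
noncomputable def projKernel (S : Finset ι) (x y : ι → α) : ℝ :=
  ∏ i, if i ∈ S then (Fintype.card α : ℝ)⁻¹ else centeredKernel (x i) (y i)

lemma projKernel_comm (S : Finset ι) (x y : ι → α) : projKernel S x y = projKernel S y x := by
  simp only [projKernel, centeredKernel_comm (x _)]

lemma sum_projKernel_mul [Nonempty α] (S : Finset ι) (x y : ι → α) :
    ∑ z, projKernel S x z * projKernel S z y = projKernel S x y := by
  have hn : (Fintype.card α : ℝ) ≠ 0 := Nat.cast_ne_zero.mpr Fintype.card_ne_zero
  simp only [projKernel, ← prod_mul_distrib]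
  rw [← Fintype.prod_sum fun i a => (if i ∈ S then (Fintype.card α : ℝ)⁻¹ else
    centeredKernel (x i) a) * if i ∈ S then (Fintype.card α : ℝ)⁻¹ else centeredKernel a (y i)]
  refine prod_congr rfl fun i _ => ?_
  split_ifs
  · simp only [sum_const, card_univ, nsmul_eq_mul]
    field_simp
  · exact sum_centeredKernel_mul _ _

lemma sum_projKernel [Nonempty α] (x y : ι → α) :
    ∑ S, projKernel S x y = if x = y then 1 else 0 := by
  simp only [projKernel, sum_prod_ite_mem, centeredKernel, add_sub_cancel, prod_boole, funext_iff]
  simp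

lemma projKernel_univ (x y : ι → α) :
    projKernel univ x y = (Fintype.card α : ℝ)⁻¹ ^ Fintype.card ι := by
  simp [projKernel]

lemma prod_ite_eq_zero_one_eq_sum_disjEigenvalue_mul [Nonempty α] (x y : ι → α) :
    ∏ i, (if x i = y i then (0 : ℝ) else 1) = ∑ S, disjEigenvalue α S * projKernel S x y := by
  have hn : (Fintype.card α : ℝ) ≠ 0 := Nat.cast_ne_zero.mpr Fintype.card_ne_zero
  have hfactor : ∀ i, (if x i = y i then (0 : ℝ) else 1) =
      ((Fintype.card α : ℝ) - 1) * (Fintype.card α : ℝ)⁻¹ + -1 * centeredKernel (x i) (y i) := by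
    intro i
    rw [centeredKernel]
    split_ifs <;> field_simp <;> ring
  simp only [hfactor, ← sum_prod_ite_mem, disjEigenvalue, projKernel, ← prod_mul_distrib]
  refine sum_congr rfl fun S _ => prod_congr rfl fun i _ => ?_
  split_ifs <;> rfl

noncomputable def projPairing (S : Finset ι) (F G : Finset (ι → α)) : ℝ :=
  ∑ x ∈ F, ∑ y ∈ G, projKernel S x y

lemma sq_projPairing_le [Nonempty α] (S : Finset ι) (F G : Finset (ι → α)) :
    projPairing S F G ^ 2 ≤ projPairing S F F * projPairing S G G :=
  sq_sum_sum_le_of_idempotent (projKernel_comm S) (sum_projKernel_mul S) F G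

lemma projPairing_self_nonneg [Nonempty α] (S : Finset ι) (F : Finset (ι → α)) :
    0 ≤ projPairing S F F :=
  sum_sum_self_nonneg_of_idempotent (projKernel_comm S) (sum_projKernel_mul S) F

lemma sum_projPairing_self [Nonempty α] (F : Finset (ι → α)) :
    ∑ S, projPairing S F F = #F := by
  simp only [projPairing]
  rw [sum_comm]
  simp_rw [sum_comm (s := univ), sum_projKernel]
  simp

lemma projPairing_univ (F G : Finset (ι → α)) :
    projPairing univ F G = #F * #G / (Fintype.card α : ℝ) ^ Fintype.card ι := by
  simp [projPairing, projKernel_univ, div_eq_mul_inv, mul_assoc]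

lemma sum_disjEigenvalue_mul_projPairing_eq_zero [Nonempty α] {F G : Finset (ι → α)}
    (hFG : CrossIntersecting F G) : ∑ S, disjEigenvalue α S * projPairing S F G = 0 := by
  calc ∑ S, disjEigenvalue α S * projPairing S F G
      = ∑ x ∈ F, ∑ y ∈ G, ∑ S, disjEigenvalue α S * projKernel S x y := by
        simp only [projPairing, mul_sum]
        rw [sum_comm]
        exact sum_congr rfl fun x _ => sum_comm
    _ = ∑ x ∈ F, ∑ y ∈ G, ∏ i, (if x i = y i then (0 : ℝ) else 1) := by
        simp_rw [prod_ite_eq_zero_one_eq_sum_disjEigenvalue_mul]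
    _ = 0 := sum_eq_zero fun x hx => sum_eq_zero fun y hy => by
        obtain ⟨i, hi⟩ := hFG x hx y hy
        exact prod_eq_zero (mem_univ i) (if_pos hi)

lemma sum_erase_univ_projPairing_self [Nonempty α] (F : Finset (ι → α)) :
    ∑ S ∈ univ.erase univ, projPairing S F F =
      #F * ((Fintype.card α : ℝ) ^ Fintype.card ι - #F) /
        (Fintype.card α : ℝ) ^ Fintype.card ι := by
  have hN : (Fintype.card α : ℝ) ^ Fintype.card ι ≠ 0 :=
    pow_ne_zero _ (Nat.cast_ne_zero.mpr Fintype.card_ne_zero)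
  rw [sum_erase_eq_sub (mem_univ _), sum_projPairing_self, projPairing_univ]
  field_simp

lemma sub_one_pow_mul_projPairing_univ_le (hn : 2 ≤ Fintype.card α) {F G : Finset (ι → α)}
    (hFG : CrossIntersecting F G) :
    ((Fintype.card α : ℝ) - 1) ^ Fintype.card ι * projPairing univ F G ≤
      ((Fintype.card α : ℝ) - 1) ^ (Fintype.card ι - 1) *
        (√(∑ S ∈ univ.erase univ, projPairing S F F) *
          √(∑ S ∈ univ.erase univ, projPairing S G G)) := by
  have : Nonempty α := Fintype.card_pos_iff.mp (by omega)
  have hn1 : (1 : ℝ) ≤ (Fintype.card α : ℝ) - 1 := by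
    rw [le_sub_iff_add_le]; exact_mod_cast hn
  have hterm : ∀ S ∈ univ.erase univ, |disjEigenvalue α S * projPairing S F G| ≤
      ((Fintype.card α : ℝ) - 1) ^ (Fintype.card ι - 1) *
        (√(projPairing S F F) * √(projPairing S G G)) := by
    intro S hS
    have hcard : #S ≤ Fintype.card ι - 1 := by
      have := (card_lt_iff_ne_univ S).mpr (ne_of_mem_erase hS)
      omega
    rw [abs_mul, abs_disjEigenvalue, ← Real.sqrt_mul (projPairing_self_nonneg S F)]
    exact mul_le_mul (pow_le_pow_right₀ hn1 hcard) (Real.abs_le_sqrt (sq_projPairing_le S F G))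
      (abs_nonneg _) (by positivity)
  have hsplit := sum_erase_add univ (fun S => disjEigenvalue α S * projPairing S F G)
    (mem_univ (univ : Finset ι))
  rw [sum_disjEigenvalue_mul_projPairing_eq_zero hFG] at hsplit
  rw [← disjEigenvalue_univ]
  calc disjEigenvalue α univ * projPairing univ F G
      = -∑ S ∈ univ.erase univ, disjEigenvalue α S * projPairing S F G := by linarith
    _ ≤ ∑ S ∈ univ.erase univ, |disjEigenvalue α S * projPairing S F G| :=
        (neg_le_abs _).trans (abs_sum_le_sum_abs _ _)
    _ ≤ ∑ S ∈ univ.erase univ, ((Fintype.card α : ℝ) - 1) ^ (Fintype.card ι - 1) *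
          (√(projPairing S F F) * √(projPairing S G G)) := sum_le_sum hterm
    _ ≤ _ := by
        rw [← mul_sum]
        exact mul_le_mul_of_nonneg_left (Real.sum_sqrt_mul_sqrt_le _
          (projPairing_self_nonneg · F) (projPairing_self_nonneg · G)) (by positivity)

theorem card_mul_card_le_of_two_le (hn : 2 ≤ Fintype.card α) (hr : 1 ≤ Fintype.card ι)
    {F G : Finset (ι → α)} (hFG : CrossIntersecting F G) :
    (#F * #G : ℝ) ≤ (Fintype.card α : ℝ) ^ (2 * (Fintype.card ι - 1)) := by
  have : Nonempty α := Fintype.card_pos_iff.mp (by omega)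
  have hbound := sub_one_pow_mul_projPairing_univ_le hn hFG
  rw [projPairing_univ, sum_erase_univ_projPairing_self, sum_erase_univ_projPairing_self] at hbound
  have hcard (H : Finset (ι → α)) : (#H : ℝ) ≤ (Fintype.card α : ℝ) ^ Fintype.card ι := by
    exact_mod_cast (card_le_univ H).trans_eq (by simp)
  set n := Fintype.card α
  set r := Fintype.card ι
  set N : ℝ := (n : ℝ) ^ r with hN
  have hn1 : (1 : ℝ) ≤ n - 1 := by
    rw [le_sub_iff_add_le]; exact_mod_cast hn
  have hN0 : 0 < N := by positivity
  have hsqrt (H : Finset (ι → α)) : √(#H * (N - #H) / N) = √(#H * (N - #H)) / √N :=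
    Real.sqrt_div (mul_nonneg (Nat.cast_nonneg _) (sub_nonneg.mpr (hcard H))) N
  rw [hsqrt, hsqrt, div_mul_div_comm, Real.mul_self_sqrt hN0.le, ← pow_sub_one_mul (by omega)]
    at hbound
  have hkey : (n - 1) * ((#F : ℝ) * #G) ≤ √(#F * (N - #F)) * √(#G * (N - #G)) := by
    refine le_of_mul_le_mul_left ?_ (pow_pos (by linarith : (0:ℝ) < n - 1) (r - 1))
    rw [← div_le_div_iff_of_pos_right hN0]
    refine (le_of_eq ?_).trans (hbound.trans_eq ?_) <;> ring
  have := mul_sq_mul_le_sq_of_le_sqrt (Nat.cast_nonneg _) (hcard F) (Nat.cast_nonneg _)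
    (hcard G) (by linarith) hkey
  rw [hN, ← pow_mul, show r * 2 = 2 * (r - 1) + 2 by omega, pow_add, mul_comm] at this
  exact le_of_mul_le_mul_right this (by positivity)

theorem card_mul_card_le_of_crossIntersecting {F G : Finset (ι → α)}
    (hFG : CrossIntersecting F G) : #F * #G ≤ Fintype.card α ^ (2 * (Fintype.card ι - 1)) := by
  by_cases h : 2 ≤ Fintype.card α ∧ 1 ≤ Fintype.card ι
  · exact_mod_cast card_mul_card_le_of_two_le h.1 h.2 hFG
  calc #F * #G ≤ Fintype.card (ι → α) * Fintype.card (ι → α) :=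
        Nat.mul_le_mul (card_le_univ F) (card_le_univ G)
    _ ≤ Fintype.card α ^ (2 * (Fintype.card ι - 1)) := by
        rw [Fintype.card_fun]
        rcases Nat.eq_zero_or_pos (Fintype.card ι) with hr | hr
        · simp [hr]
        · have hn : Fintype.card α ≤ 1 := by omega
          interval_cases Fintype.card α <;> simp [hr.ne']

end PartiteHypergraph

theorem stmt11 (n r : ℕ) (F₁ F₂ : Finset (Fin r → Fin n))
    (h : n ^ (2 * (r - 1)) < F₁.card * F₂.card) :
    ∃ e₁ ∈ F₁, ∃ e₂ ∈ F₂, ∀ i, e₁ i ≠ e₂ i := by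
  by_contra! hFG
  have := PartiteHypergraph.card_mul_card_le_of_crossIntersecting hFG
  simp only [Fintype.card_fin] at this
  omega
end
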